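/- If two lists x and y are each permutations of extensions of one another's commuting-swap equivalence class and all commands in x commute with all commands in y, then x ++ y ∼ y ++ x. -/

import Mathlib

variable {Cmd : Type*}

/-- One swap of two adjacent commuting commands. -/
inductive AdjSwap (commutes : Cmd → Cmd → Prop) : List Cmd → List Cmd → Prop
  | swap (s t : List Cmd) (a b : Cmd) (h : commutes a b) :
      AdjSwap commutes (s ++ [a, b] ++ t) (s ++ [b, a] ++ t)

/-- Sequence equivalence: equivalence closure of adjacent commuting swaps. -/
def SeqEquiv (commutes : Cmd → Cmd → Prop) : List Cmd → List Cmd → Prop :=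
  Relation.EqvGen (AdjSwap commutes)

/-- Eq-prefix relation. -/
def EqPrefix (commutes : Cmd → Cmd → Prop) (x y : List Cmd) : Prop :=
  ∃ σ : List Cmd, SeqEquiv commutes (x ++ σ) y

lemma seqEquiv_cons {commutes : Cmd → Cmd → Prop} (a : Cmd) {l l' : List Cmd}
    (h : SeqEquiv commutes l l') : SeqEquiv commutes (a :: l) (a :: l') := by
  induction h with
  | rel u v huv =>
    cases huv with
    | swap s t b c hbc =>
      exact Relation.EqvGen.rel _ _ (by simpa using AdjSwap.swap (a :: s) t b c hbc)
  | refl u => exact Relation.EqvGen.refl _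
  | symm u v _ ih => exact Relation.EqvGen.symm _ _ ih
  | trans u v w _ _ ih1 ih2 => exact Relation.EqvGen.trans _ _ _ ih1 ih2

lemma seqEquiv_append_right {commutes : Cmd → Cmd → Prop} (r : List Cmd) {l l' : List Cmd}
    (h : SeqEquiv commutes l l') : SeqEquiv commutes (l ++ r) (l' ++ r) := by
  induction h with
  | rel u v huv =>
    cases huv with
    | swap s t b c hbc =>
      refine Relation.EqvGen.rel _ _ ?_
      have := AdjSwap.swap s (t ++ r) b c hbc
      simpa using this
  | refl u => exact Relation.EqvGen.refl _
  | symm u v _ ih => exact Relation.EqvGen.symm _ _ ih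
  | trans u v w _ _ ih1 ih2 => exact Relation.EqvGen.trans _ _ _ ih1 ih2

lemma seqEquiv_move {commutes : Cmd → Cmd → Prop} (a : Cmd) (y : List Cmd)
    (h : ∀ b ∈ y, commutes a b) : SeqEquiv commutes (a :: y) (y ++ [a]) := by
  induction y with
  | nil => exact Relation.EqvGen.refl _
  | cons b y ih =>
    have h1 : SeqEquiv commutes (a :: b :: y) (b :: a :: y) :=
      Relation.EqvGen.rel _ _ (by simpa using AdjSwap.swap [] y a b (h b (by simp)))
    have h2 : SeqEquiv commutes (b :: a :: y) (b :: (y ++ [a])) :=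
      seqEquiv_cons b (ih fun c hc => h c (by simp [hc]))
    exact Relation.EqvGen.trans _ _ _ h1 h2

theorem stmt14 (commutes : Cmd → Cmd → Prop)
    (hsymm : ∀ a b, commutes a b → commutes b a)
    (x y : List Cmd) (h : ∀ a ∈ x, ∀ b ∈ y, commutes a b) :
    SeqEquiv commutes (x ++ y) (y ++ x) := by
  induction x with
  | nil => simpa [SeqEquiv] using Relation.EqvGen.refl (y : List Cmd)
  | cons a x ih =>
    have h1 : SeqEquiv commutes (a :: (x ++ y)) (a :: (y ++ x)) :=
      seqEquiv_cons a (ih fun c hc => h c (by simp [hc]))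
    have h2 : SeqEquiv commutes ((a :: y) ++ x) ((y ++ [a]) ++ x) :=
      seqEquiv_append_right x (seqEquiv_move a y (h a (by simp)))
    simp only [List.cons_append] at *
    refine Relation.EqvGen.trans _ _ _ h1 ?_
    simpa [SeqEquiv] using h2
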